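/- Let δ be a level-1 representable symbolic 3-dissimilarity on X and Y ⊆ X with |Y| ≥ 3. Then the restriction δ|_Y (to nonempty subsets of Y of size at most 3) is also level-1 representable. -/

import Mathlib

/-- A rooted phylogenetic network on leaf set `X`: a rooted DAG whose leaves are
identified with `X`, with no vertex of indegree one and outdegree one. -/
structure PhyloNetwork (X : Type) [Fintype X] [DecidableEq X] where
  V : Type
  [instFin : Fintype V]
  [instDec : DecidableEq V]
  adj : V → V → Prop
  root : V
  leaf : X → V
  acyclic : ∀ v : V, ¬ Relation.TransGen adj v v
  root_no_in : ∀ u : V, ¬ adj u root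
  connected : ∀ v : V, Relation.ReflTransGen adj root v
  leaf_inj : Function.Injective leaf
  leaf_no_out : ∀ (x : X) (w : V), ¬ adj (leaf x) w
  leaves_only : ∀ v : V, (∀ w : V, ¬ adj v w) → v = root ∨ ∃ x, leaf x = v
  no_inout_one : ∀ v : V, ¬ ((∃! u : V, adj u v) ∧ (∃! w : V, adj v w))

namespace PhyloNetwork

variable {X : Type} [Fintype X] [DecidableEq X]

/-- Reachability by a directed path. -/
def reaches (N : PhyloNetwork X) : N.V → N.V → Prop := Relation.ReflTransGen N.adj

/-- The offspring set of a vertex: all leaves below it. -/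
def F (N : PhyloNetwork X) (v : N.V) : Set X := {x | N.reaches v (N.leaf x)}

/-- `v` is a leaf vertex. -/
def IsLeafV (N : PhyloNetwork X) (v : N.V) : Prop := ∃ x, N.leaf x = v

/-- `v` is a lowest common ancestor of the set `Y` of leaves. -/
def IsLca (N : PhyloNetwork X) (Y : Finset X) (v : N.V) : Prop :=
  (∀ x ∈ Y, x ∈ N.F v) ∧ ∀ w : N.V, N.adj v w → ¬ (∀ x ∈ Y, x ∈ N.F w)

/-- A cycle of a (level-1) network: two edge-disjoint, internally vertex-disjoint
directed paths from a root `r` to a hybrid `h`, with at least 3 vertices in total.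
`side1` and `side2` list the internal vertices of the two sides in order. -/
structure NCycle (N : PhyloNetwork X) where
  r : N.V
  h : N.V
  side1 : List N.V
  side2 : List N.V
  chain1 : List.Chain N.adj r (side1 ++ [h])
  chain2 : List.Chain N.adj r (side2 ++ [h])
  ne : r ≠ h
  nodup1 : (r :: (side1 ++ [h])).Nodup
  nodup2 : (r :: (side2 ++ [h])).Nodup
  disj : ∀ v ∈ side1, v ∉ side2
  nontriv : side1 ≠ [] ∨ side2 ≠ []

/-- The vertex set of a cycle. -/
def NCycle.verts {N : PhyloNetwork X} (C : NCycle N) : Set N.V :=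
  {C.r, C.h} ∪ {v | v ∈ C.side1} ∪ {v | v ∈ C.side2}

/-- A level-1 network: every vertex belongs to at most one cycle. -/
def IsLevelOne (N : PhyloNetwork X) : Prop :=
  ∀ C C' : NCycle N, ∀ v : N.V, v ∈ C.verts → v ∈ C'.verts → C.verts = C'.verts

/-- `R(C)`: the leaves below the root of the cycle `C`. -/
def NCycle.RC {N : PhyloNetwork X} (C : NCycle N) : Set X := N.F C.r

/-- `H(C)`: the leaves below the hybrid of the cycle `C`. -/
def NCycle.HC {N : PhyloNetwork X} (C : NCycle N) : Set X := N.F C.h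

/-- `v` is the last ancestor `v_C(x)` of the leaf `x` lying in the cycle `C`. -/
def NCycle.LastAnc {N : PhyloNetwork X} (C : NCycle N) (v : N.V) (x : X) : Prop :=
  v ∈ C.verts ∧ N.reaches v (N.leaf x) ∧
    ∀ w ∈ C.verts, N.reaches w (N.leaf x) → N.reaches w v

end PhyloNetwork

/-- A symbolic 3-dissimilarity on `X` with values in `M ∪ {⊙}` (`⊙` = `none`):
singletons get `⊙`, sets of size 2 or 3 get values in `M`. -/
structure SymbolicDissim3 (X M : Type) [DecidableEq X] where
  val : Finset X → Option M
  singleton_none : ∀ A : Finset X, A.card = 1 → val A = none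
  pair_some : ∀ A : Finset X, A.card = 2 ∨ A.card = 3 → val A ≠ none

/-- The labelled network `(N,t)` represents `δ`: for every `Y ⊆ X` of size 2 or 3,
`δ(Y) = t(lca_N(Y))`. -/
def PhyloNetwork.Represents {X M : Type} [Fintype X] [DecidableEq X]
    (N : PhyloNetwork X) (t : N.V → M) (d : SymbolicDissim3 X M) : Prop :=
  ∀ Y : Finset X, Y.card = 2 ∨ Y.card = 3 → ∀ v : N.V, N.IsLca Y v → d.val Y = some (t v)

/-- `δ` is level-1 representable. -/
def SymbolicDissim3.LevelOneRepresentable {X M : Type} [Fintype X] [DecidableEq X]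
    (d : SymbolicDissim3 X M) : Prop :=
  ∃ (N : PhyloNetwork X) (t : N.V → M), N.IsLevelOne ∧ N.Represents t d

/-- The restriction of a symbolic 3-dissimilarity on `X` to a subset `Y ⊆ X`. -/
def SymbolicDissim3.restrict {X M : Type} [DecidableEq X]
    (d : SymbolicDissim3 X M) (Y : Finset X) : SymbolicDissim3 {x // x ∈ Y} M where
  val A := d.val (A.map (Function.Embedding.subtype fun x => x ∈ Y))
  singleton_none A h := d.singleton_none _ (by simpa using h)
  pair_some A h := d.pair_some _ (by simpa using h)

/-!
Restricting the leaf map of a level-1 network representing `δ` to `Y` gives a rooted DAG that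
represents `δ|_Y`, except that it may have sinks that are no longer leaves and vertices of in- and
out-degree one. Such a vertex `v` is removed by bypassing it: `v` is deleted and every path
`a → v → b` is replaced by an edge `a → b`. Since `v` has at most one child, the other vertices
keep their offspring sets, so an lca after the bypass was an lca before. Since at most one path
`a → v → b` exists, every cycle after the bypass becomes a cycle before it by reinserting `v`,
so the graph stays level-1. Bypassing until no such vertex is left yields a level-1 network
representing `δ|_Y`.
-/

open Relation

namespace List

variable {α : Type*}

section InsertBetween

variable (P : α → α → Prop) [DecidableRel P] (v : α)

/-- The tail after `a` of `a :: l` with `v` inserted between all consecutive `b`, `c` with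
`P b c`. -/
def insertBetween : α → List α → List α
  | _, [] => []
  | a, b :: l => if P a b then v :: b :: insertBetween b l else b :: insertBetween b l

variable {P v}

theorem isChain_insertBetween {R : α → α → Prop} (hP : ∀ a b, P a b → R a v ∧ R v b) :
    ∀ {a : α} {l : List α}, IsChain (fun a b => R a b ∨ P a b) (a :: l) →
      IsChain R (a :: insertBetween P v a l)
  | _, [], _ => .singleton _
  | a, b :: l, h => by
    rw [isChain_cons_cons] at h
    have ih := isChain_insertBetween hP h.2
    unfold insertBetween
    split_ifs with hab
    · exact .cons_cons (hP a b hab).1 (.cons_cons (hP a b hab).2 ih)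
    · exact .cons_cons (h.1.resolve_right hab) ih

theorem mem_insertBetween_of_mem :
    ∀ {a x : α} {l : List α}, x ∈ l → x ∈ insertBetween P v a l
  | _, _, b :: l, hx => by
    unfold insertBetween
    rcases hx with _ | ⟨_, hx⟩
    · split_ifs <;> simp
    · split_ifs <;> simp [mem_insertBetween_of_mem hx]

theorem mem_or_of_mem_insertBetween : ∀ {a x : α} {l : List α}, x ∈ insertBetween P v a l →
    x ∈ l ∨ x = v ∧ ∃ b c, P b c ∧ [b, c] <:+: a :: l
  | _, _, [], h => absurd h not_mem_nil
  | a, x, b :: l, h => by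
    have step : x ∈ b :: insertBetween P v b l →
        x ∈ b :: l ∨ x = v ∧ ∃ b' c, P b' c ∧ [b', c] <:+: a :: b :: l := by
      rintro (_ | ⟨_, hx⟩)
      · exact .inl mem_cons_self
      · rcases mem_or_of_mem_insertBetween hx with hx | ⟨rfl, b', c, hP, hi⟩
        · exact .inl (mem_cons_of_mem _ hx)
        · exact .inr ⟨rfl, b', c, hP, infix_cons hi⟩
    unfold insertBetween at h
    split_ifs at h with hab
    · rcases h with _ | ⟨_, h⟩
      · exact .inr ⟨rfl, a, b, hab, prefix_append _ _ |>.isInfix⟩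
      · exact step h
    · exact step h

theorem nodup_insertBetween (huniq : ∀ a b a' b', P a b → P a' b' → a = a') :
    ∀ {a : α} {l : List α}, (a :: l).Nodup → v ∉ a :: l →
      (a :: insertBetween P v a l).Nodup
  | _, [], _, _ => nodup_singleton _
  | a, b :: l, hn, hv => by
    have ha : a ∉ insertBetween P v b l := fun h => by
      rcases mem_or_of_mem_insertBetween h with h | ⟨rfl, -⟩
      · exact (nodup_cons.1 hn).1 (mem_cons_of_mem _ h)
      · exact hv mem_cons_self
    have ih := nodup_insertBetween huniq (nodup_cons.1 hn).2 (fun h => hv (mem_cons_of_mem _ h))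
    unfold insertBetween
    split_ifs with hab
    · refine nodup_cons.2 ⟨?_, nodup_cons.2 ⟨fun h => ?_, ih⟩⟩
      · simp only [mem_cons, not_or]
        exact ⟨fun h => hv (h ▸ mem_cons_self),
          fun h => (nodup_cons.1 hn).1 (h ▸ mem_cons_self), ha⟩
      · rcases mem_cons.1 h with h | h
        · exact hv (h ▸ mem_cons_of_mem _ mem_cons_self)
        rcases mem_or_of_mem_insertBetween h with h | ⟨-, a', c, hP, hi⟩
        · exact hv (mem_cons_of_mem _ (mem_cons_of_mem _ h))
        · exact (nodup_cons.1 hn).1 (huniq a b a' c hab hP ▸ hi.subset (by simp))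
    · simp only [nodup_cons, mem_cons, not_or] at ih ⊢
      exact ⟨⟨fun h => (nodup_cons.1 hn).1 (h ▸ mem_cons_self), ha⟩, ih⟩

theorem exists_insertBetween_append_singleton (a h : α) :
    ∀ s : List α, ∃ s', insertBetween P v a (s ++ [h]) = s' ++ [h]
  | [] => by
    by_cases P a h
    · exact ⟨[v], by simp_all [insertBetween]⟩
    · exact ⟨[], by simp_all [insertBetween]⟩
  | b :: s => by
    obtain ⟨s', hs'⟩ := exists_insertBetween_append_singleton b h s
    by_cases P a b
    · exact ⟨v :: b :: s', by simp_all [insertBetween]⟩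
    · exact ⟨b :: s', by simp_all [insertBetween]⟩

end InsertBetween

theorem ne_head_of_infix_cons {a b r : α} {l : List α} (hn : (r :: l).Nodup)
    (hi : [a, b] <:+: r :: l) : b ≠ r := by
  rintro rfl
  obtain ⟨A, B, e⟩ := hi
  cases A with
  | nil => obtain ⟨-, rfl⟩ := (cons.inj e); simp at hn
  | cons c A => obtain ⟨-, rfl⟩ := (cons.inj e); simp at hn

theorem eq_nil_of_infix_cons_append {r h : α} {s : List α} (hn : (r :: (s ++ [h])).Nodup)
    (hi : [r, h] <:+: r :: (s ++ [h])) : s = [] := by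
  obtain ⟨A, B, e⟩ := hi
  cases A with
  | nil => cases s <;> simp_all
  | cons c A =>
    have : r ∈ s ++ [h] := by simp [← (cons.inj e).2]
    exact absurd this (nodup_cons.1 hn).1

end List

def bypassRel {V : Type*} (R : V → V → Prop) (v a b : V) : Prop := R a b ∨ (R a v ∧ R v b)

/-- `PhyloNetwork.NCycle` for an arbitrary edge relation. -/
structure RelCycle {V : Type*} (R : V → V → Prop) where
  r : V
  h : V
  side1 : List V
  side2 : List V
  chain1 : List.IsChain R (r :: (side1 ++ [h]))
  chain2 : List.IsChain R (r :: (side2 ++ [h]))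
  ne : r ≠ h
  nodup1 : (r :: (side1 ++ [h])).Nodup
  nodup2 : (r :: (side2 ++ [h])).Nodup
  disj : ∀ v ∈ side1, v ∉ side2
  nontriv : side1 ≠ [] ∨ side2 ≠ []

namespace RelCycle

variable {V W : Type*} {R : V → V → Prop} (C : RelCycle R)

def verts : Set V := {C.r, C.h} ∪ {v | v ∈ C.side1} ∪ {v | v ∈ C.side2}

abbrev path1 : List V := C.r :: (C.side1 ++ [C.h])

abbrev path2 : List V := C.r :: (C.side2 ++ [C.h])

theorem mem_verts {x : V} : x ∈ C.verts ↔ x ∈ C.path1 ∨ x ∈ C.path2 := by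
  simp only [verts, path1, path2, Set.mem_union, Set.mem_insert_iff, Set.mem_singleton_iff,
    Set.mem_ofPred_eq, List.mem_cons, List.mem_append]
  tauto

theorem eq_r_or_eq_h_of_mem_path1_of_mem_path2 {x : V} (h1 : x ∈ C.path1) (h2 : x ∈ C.path2) :
    x = C.r ∨ x = C.h := by
  grind [C.nodup1, C.disj x, List.nodup_cons, List.nodup_append]

/-- An edge lying on both sides of a cycle would be the edge from its root to its hybrid, and
both sides would be empty. -/
theorem not_infix_path2_of_infix_path1 {a b : V} (h1 : [a, b] <:+: C.path1) :
    ¬ [a, b] <:+: C.path2 := by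
  intro h2
  have hb : b = C.h := (C.eq_r_or_eq_h_of_mem_path1_of_mem_path2 (h1.subset (by simp))
    (h2.subset (by simp))).resolve_left (List.ne_head_of_infix_cons C.nodup1 h1)
  have ha : a = C.r := (C.eq_r_or_eq_h_of_mem_path1_of_mem_path2 (h1.subset (by simp))
    (h2.subset (by simp))).resolve_right (hb ▸ by simpa using h1.sublist.nodup C.nodup1)
  subst ha hb
  exact C.nontriv.elim (· (List.eq_nil_of_infix_cons_append C.nodup1 h1))
    (· (List.eq_nil_of_infix_cons_append C.nodup2 h2))

def map {S : W → W → Prop} (f : V → W) (hf : Function.Injective f)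
    (hRS : ∀ a b, R a b → S (f a) (f b)) : RelCycle S where
  r := f C.r
  h := f C.h
  side1 := C.side1.map f
  side2 := C.side2.map f
  chain1 := by simpa using List.isChain_map_of_isChain f hRS C.chain1
  chain2 := by simpa using List.isChain_map_of_isChain f hRS C.chain2
  ne := hf.ne C.ne
  nodup1 := by simpa using C.nodup1.map hf
  nodup2 := by simpa using C.nodup2.map hf
  disj x hx1 hx2 := by
    obtain ⟨y, hy, rfl⟩ := List.mem_map.1 hx1
    exact C.disj y hy ((List.mem_map_of_injective hf).1 hx2)
  nontriv := by simpa using C.nontriv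

theorem verts_map {S : W → W → Prop} (f : V → W) (hf : Function.Injective f)
    (hRS : ∀ a b, R a b → S (f a) (f b)) : (C.map f hf hRS).verts = f '' C.verts := by
  ext
  simp only [verts, map, Set.image]
  aesop

variable {v : V}

theorem exists_subdivide_side {r h : V} {s : List V}
    (hc : List.IsChain (bypassRel R v) (r :: (s ++ [h]))) (hn : (r :: (s ++ [h])).Nodup)
    (hv : v ∉ r :: (s ++ [h]))
    (huniq : ∀ a b a' b', R a v → R v b → R a' v → R v b' → a = a') :
    ∃ s', List.IsChain R (r :: (s' ++ [h])) ∧ (r :: (s' ++ [h])).Nodup ∧ s ⊆ s' ∧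
      ∀ x ∈ s', x ∈ s ∨
        x = v ∧ ∃ a b, (R a v ∧ R v b) ∧ [a, b] <:+: r :: (s ++ [h]) := by
  classical
  obtain ⟨s', e⟩ :=
    List.exists_insertBetween_append_singleton (P := fun a b => R a v ∧ R v b) (v := v) r h s
  have hc' := List.isChain_insertBetween (fun _ _ h => h) hc
  have hn' := List.nodup_insertBetween (P := fun a b => R a v ∧ R v b)
    (fun a b a' b' h h' => huniq a b a' b' h.1 h.2 h'.1 h'.2) hn hv
  rw [e] at hc' hn'
  refine ⟨s', hc', hn', fun x hx => ?_, fun x hx => ?_⟩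
  · have hx' : x ∈ s' ++ [h] := e ▸ List.mem_insertBetween_of_mem (List.mem_append_left _ hx)
    have : h ∉ s := by grind [List.nodup_cons, List.nodup_append]
    grind
  · have hx' := List.mem_or_of_mem_insertBetween (e ▸ List.mem_append_left [h] hx)
    have : h ∉ s' := by grind [List.nodup_cons, List.nodup_append]
    grind

theorem exists_subdivide (C : RelCycle (bypassRel R v)) (hv : v ∉ C.verts)
    (huniq : ∀ a b a' b', R a v → R v b → R a' v → R v b' → a = a' ∧ b = b') :
    ∃ D : RelCycle R, C.verts ⊆ D.verts ∧ D.verts ⊆ insert v C.verts := by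
  have hv1 : v ∉ C.path1 := fun h => hv (C.mem_verts.2 (.inl h))
  have hv2 : v ∉ C.path2 := fun h => hv (C.mem_verts.2 (.inr h))
  have hu a b a' b' ha hb ha' hb' := (huniq a b a' b' ha hb ha' hb').1
  obtain ⟨s1, hc1, hn1, hs1, hs1'⟩ := exists_subdivide_side C.chain1 C.nodup1 hv1 hu
  obtain ⟨s2, hc2, hn2, hs2, hs2'⟩ := exists_subdivide_side C.chain2 C.nodup2 hv2 hu
  refine ⟨⟨C.r, C.h, s1, s2, hc1, hc2, C.ne, hn1, hn2, fun x hx1 hx2 => ?_, ?_⟩, ?_, ?_⟩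
  · rcases hs1' x hx1 with hx1 | ⟨rfl, a, b, ⟨ha, hb⟩, hi1⟩ <;>
      rcases hs2' x hx2 with hx2 | ⟨hxv, a', b', ⟨ha', hb'⟩, hi2⟩
    · exact C.disj x hx1 hx2
    · exact hv1 (hxv ▸ by simp [hx1])
    · exact hv2 (by simp [hx2])
    · obtain ⟨rfl, rfl⟩ := huniq a b a' b' ha hb ha' hb'
      exact C.not_infix_path2_of_infix_path1 hi1 hi2
  · exact C.nontriv.imp (fun h e => h (List.eq_nil_of_subset_nil (e ▸ hs1)))
      (fun h e => h (List.eq_nil_of_subset_nil (e ▸ hs2)))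
  · exact Set.union_subset_union (Set.union_subset_union_right _ hs1) hs2
  · rintro x ((hx | hx) | hx)
    · exact .inr (.inl (.inl hx))
    · rcases hs1' x hx with hx | ⟨rfl, -⟩
      exacts [.inr (.inl (.inr hx)), .inl rfl]
    · rcases hs2' x hx with hx | ⟨rfl, -⟩
      exacts [.inr (.inr hx), .inl rfl]

end RelCycle

def IsLevelOneRel {V : Type*} (R : V → V → Prop) : Prop :=
  ∀ C C' : RelCycle R, ∀ v, v ∈ C.verts → v ∈ C'.verts → C.verts = C'.verts

section Bypass

variable {V : Type*} {R : V → V → Prop} {v : V}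

theorem transGen_of_bypassRel {a b : V} (h : bypassRel R v a b) : TransGen R a b :=
  h.elim .single fun h => .tail (.single h.1) h.2

theorem reflTransGen_bypassRel {a b : V} (ha : a ≠ v) (hb : b ≠ v) (h : ReflTransGen R a b) :
    ReflTransGen (fun x y : {w // w ≠ v} => bypassRel R v x y) ⟨a, ha⟩ ⟨b, hb⟩ := by
  -- a path to `v` is bypassed at its last vertex before `v`
  suffices ∃ b' : {w // w ≠ v}, ReflTransGen (fun x y : {w // w ≠ v} => bypassRel R v x y)
      ⟨a, ha⟩ b' ∧ (b'.1 = b ∨ R b' v ∧ b = v) by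
    obtain ⟨b', hb', rfl | ⟨-, rfl⟩⟩ := this
    exacts [hb', absurd rfl hb]
  clear hb
  induction h with
  | refl => exact ⟨_, .refl, .inl rfl⟩
  | @tail u c _ huc ih =>
    obtain ⟨b', hb', hu⟩ := ih
    by_cases hc : c = v
    · subst hc
      refine ⟨b', hb', .inr ⟨?_, rfl⟩⟩
      rcases hu with rfl | ⟨h, -⟩
      exacts [huc, h]
    · refine ⟨⟨c, hc⟩, hb'.tail ?_, .inl rfl⟩
      rcases hu with rfl | ⟨h, rfl⟩
      exacts [.inl huc, .inr ⟨h, huc⟩]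

theorem IsLevelOneRel.bypass (hR : IsLevelOneRel R)
    (huniq : ∀ a b a' b', R a v → R v b → R a' v → R v b' → a = a' ∧ b = b') :
    IsLevelOneRel (fun a b : {w // w ≠ v} => bypassRel R v a b) := by
  have lift (C : RelCycle fun a b : {w // w ≠ v} => bypassRel R v a b) : ∃ D : RelCycle R,
      Subtype.val '' C.verts ⊆ D.verts ∧ D.verts ⊆ insert v (Subtype.val '' C.verts) := by
    rw [← C.verts_map Subtype.val Subtype.val_injective (fun _ _ h => h)]
    refine RelCycle.exists_subdivide _ ?_ huniq
    rw [RelCycle.verts_map]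
    rintro ⟨w, -, hw⟩
    exact w.2 hw
  have reflect {s t : Set {w // w ≠ v}} (h : Subtype.val '' s ⊆ insert v (Subtype.val '' t)) :
      s ⊆ t := by
    intro x hx
    rcases h ⟨x, hx, rfl⟩ with h | ⟨y, hy, e⟩
    exacts [absurd h x.2, Subtype.ext e ▸ hy]
  intro C C' w hw hw'
  obtain ⟨D, hCD, hDC⟩ := lift C
  obtain ⟨D', hCD', hDC'⟩ := lift C'
  have hDD := hR D D' w (hCD ⟨w, hw, rfl⟩) (hCD' ⟨w, hw', rfl⟩)
  exact (reflect (hCD.trans (hDD ▸ hDC'))).antisymm (reflect (hCD'.trans (hDD ▸ hDC)))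

end Bypass

/-- A phylogenetic network without the conditions `leaves_only` and `no_inout_one`. -/
structure PreNetwork (L : Type) where
  V : Type
  [instFintype : Fintype V]
  [instDecidableEq : DecidableEq V]
  adj : V → V → Prop
  root : V
  leaf : L → V
  acyclic : ∀ v : V, ¬ TransGen adj v v
  root_no_in : ∀ u : V, ¬ adj u root
  connected : ∀ v : V, ReflTransGen adj root v
  leaf_inj : Function.Injective leaf
  leaf_no_out : ∀ (x : L) (w : V), ¬ adj (leaf x) w

namespace PreNetwork

attribute [instance] instFintype instDecidableEq

variable {L M : Type} (G : PreNetwork L)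

def F (v : G.V) : Set L := {x | ReflTransGen G.adj v (G.leaf x)}

def IsLca (A : Finset L) (v : G.V) : Prop :=
  (∀ x ∈ A, x ∈ G.F v) ∧ ∀ w : G.V, G.adj v w → ¬ ∀ x ∈ A, x ∈ G.F w

def Represents [DecidableEq L] (t : G.V → M) (δ : SymbolicDissim3 L M) : Prop :=
  ∀ A : Finset L, A.card = 2 ∨ A.card = 3 → ∀ v : G.V, G.IsLca A v → δ.val A = some (t v)

structure Bypassable (v : G.V) : Prop where
  ne_root : v ≠ G.root
  ne_leaf : ∀ x, G.leaf x ≠ v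
  child_unique : ∀ c c', G.adj v c → G.adj v c' → c = c'
  parent_unique : ∀ p p' c, G.adj p v → G.adj p' v → G.adj v c → p = p'

variable {G} {v : G.V}

def bypass (hv : G.Bypassable v) : PreNetwork L where
  V := {w : G.V // w ≠ v}
  adj a b := bypassRel G.adj v a b
  root := ⟨G.root, hv.ne_root.symm⟩
  leaf x := ⟨G.leaf x, hv.ne_leaf x⟩
  acyclic a h := G.acyclic a (TransGen.lift' Subtype.val (fun _ _ => transGen_of_bypassRel) _ _ h)
  root_no_in u h := h.elim (G.root_no_in u) fun h => G.root_no_in v h.2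
  connected w := reflTransGen_bypassRel _ _ (G.connected w)
  leaf_inj _ _ h := G.leaf_inj (congrArg Subtype.val h)
  leaf_no_out x w h := h.elim (G.leaf_no_out x w) fun h => G.leaf_no_out x v h.1

variable (hv : G.Bypassable v)

theorem card_bypass_lt : Fintype.card (G.bypass hv).V < Fintype.card G.V :=
  Fintype.card_subtype_lt (p := (· ≠ v)) (x := v) (by simp)

theorem mem_F_bypass {w : (G.bypass hv).V} {x : L} : x ∈ (G.bypass hv).F w ↔ x ∈ G.F w.1 :=
  ⟨ReflTransGen.lift' Subtype.val (fun _ _ h => (transGen_of_bypassRel h).to_reflTransGen) _ _,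
    reflTransGen_bypassRel _ _⟩

theorem exists_child_of_mem_F {x : L} (hx : x ∈ G.F v) (hl : G.leaf x ≠ v) :
    ∃ c, G.adj v c ∧ x ∈ G.F c :=
  (ReflTransGen.cases_head hx).resolve_left (Ne.symm hl)

theorem isLca_of_isLca_bypass {A : Finset L} (hA : A.Nonempty) {w : (G.bypass hv).V}
    (hw : (G.bypass hv).IsLca A w) : G.IsLca A w.1 := by
  refine ⟨fun x hx => (mem_F_bypass hv).1 (hw.1 x hx), fun u hu hcov => ?_⟩
  by_cases huv : u = v
  · subst huv
    obtain ⟨x, hx⟩ := hA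
    obtain ⟨c, hc, -⟩ := exists_child_of_mem_F (hcov x hx) (hv.ne_leaf x)
    have hcu : c ≠ u := fun h => G.acyclic u (.single (h ▸ hc))
    refine hw.2 ⟨c, hcu⟩ (.inr ⟨hu, hc⟩) fun y hy => (mem_F_bypass hv).2 ?_
    obtain ⟨c', hc', hy⟩ := exists_child_of_mem_F (hcov y hy) (hv.ne_leaf y)
    exact hv.child_unique c' c hc' hc ▸ hy
  · exact hw.2 ⟨u, huv⟩ (.inl hu) fun x hx => (mem_F_bypass hv).2 (hcov x hx)

theorem Represents.bypass [DecidableEq L] {t : G.V → M} {δ : SymbolicDissim3 L M}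
    (h : G.Represents t δ) : (G.bypass hv).Represents (fun w => t w.1) δ :=
  fun A hA w hw => h A hA w.1 (isLca_of_isLca_bypass hv (Finset.card_pos.1 (by omega)) hw)

theorem isLevelOneRel_bypass (h : IsLevelOneRel G.adj) : IsLevelOneRel (G.bypass hv).adj :=
  h.bypass fun a b a' b' ha hb ha' hb' =>
    ⟨hv.parent_unique a a' b ha ha' hb, hv.child_unique b b' hb hb'⟩

variable (G) [Fintype L] [DecidableEq L]

def toPhyloNetwork (h : ∀ v, ¬ G.Bypassable v) : PhyloNetwork L where
  V := G.V
  adj := G.adj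
  root := G.root
  leaf := G.leaf
  acyclic := G.acyclic
  root_no_in := G.root_no_in
  connected := G.connected
  leaf_inj := G.leaf_inj
  leaf_no_out := G.leaf_no_out
  leaves_only v hv := by
    by_contra! hne
    exact h v ⟨hne.1, hne.2, fun c _ hc => absurd hc (hv c),
      fun _ _ c _ _ hc => absurd hc (hv c)⟩
  no_inout_one := by
    rintro v ⟨⟨p, hp, hpu⟩, ⟨c, hc, hcu⟩⟩
    exact h v ⟨fun e => G.root_no_in p (e ▸ hp), fun x e => G.leaf_no_out x c (e ▸ hc),
      fun c c' h h' => (hcu c h).trans (hcu c' h').symm,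
      fun p p' _ h h' _ => (hpu p h).trans (hpu p' h').symm⟩

end PreNetwork

namespace PhyloNetwork

variable {X M : Type} [Fintype X] [DecidableEq X]

def NCycle.toRelCycle {N : PhyloNetwork X} (C : N.NCycle) : RelCycle N.adj :=
  ⟨C.r, C.h, C.side1, C.side2, C.chain1, C.chain2, C.ne, C.nodup1, C.nodup2, C.disj, C.nontriv⟩

def _root_.RelCycle.toNCycle {N : PhyloNetwork X} (C : RelCycle N.adj) : N.NCycle :=
  ⟨C.r, C.h, C.side1, C.side2, C.chain1, C.chain2, C.ne, C.nodup1, C.nodup2, C.disj, C.nontriv⟩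

theorem isLevelOne_iff_isLevelOneRel (N : PhyloNetwork X) : N.IsLevelOne ↔ IsLevelOneRel N.adj :=
  ⟨fun h C C' => h C.toNCycle C'.toNCycle, fun h C C' => h C.toRelCycle C'.toRelCycle⟩

def restrictLeaves (N : PhyloNetwork X) (Y : Finset X) : PreNetwork Y where
  V := N.V
  instFintype := N.instFin
  instDecidableEq := N.instDec
  adj := N.adj
  root := N.root
  leaf y := N.leaf y
  acyclic := N.acyclic
  root_no_in := N.root_no_in
  connected := N.connected
  leaf_inj := N.leaf_inj.comp Subtype.val_injective
  leaf_no_out y := N.leaf_no_out y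

theorem Represents.restrictLeaves {N : PhyloNetwork X} {t : N.V → M} {d : SymbolicDissim3 X M}
    (h : N.Represents t d) (Y : Finset X) : (N.restrictLeaves Y).Represents t (d.restrict Y) := by
  intro A hA w hw
  refine h _ (by rwa [Finset.card_map]) w ⟨?_, fun u hu hcov => hw.2 u hu fun x hx =>
    hcov _ (Finset.mem_map_of_mem _ hx)⟩
  exact Finset.forall_mem_map.2 hw.1

end PhyloNetwork

namespace PreNetwork

theorem levelOneRepresentable_of_represents {L M : Type} [Fintype L] [DecidableEq L]
    (G : PreNetwork L) {t : G.V → M} {δ : SymbolicDissim3 L M} (h1 : IsLevelOneRel G.adj)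
    (hrep : G.Represents t δ) : δ.LevelOneRepresentable := by
  induction hn : Fintype.card G.V using Nat.strong_induction_on generalizing G with
  | _ n ih =>
  by_cases hb : ∃ v, G.Bypassable v
  · obtain ⟨v, hv⟩ := hb
    exact ih _ (hn ▸ card_bypass_lt hv) (G.bypass hv) (isLevelOneRel_bypass hv h1)
      (hrep.bypass hv) rfl
  · push Not at hb
    exact ⟨G.toPhyloNetwork hb, t, (PhyloNetwork.isLevelOne_iff_isLevelOneRel _).2 h1, hrep⟩

end PreNetwork

theorem restrict_levelOneRepresentable_general {X M : Type}
    [Fintype X] [DecidableEq X]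
    (d : SymbolicDissim3 X M) (hrep : d.LevelOneRepresentable)
    (Y : Finset X) :
    (d.restrict Y).LevelOneRepresentable := by
  obtain ⟨N, t, hN, hNt⟩ := hrep
  exact (N.restrictLeaves Y).levelOneRepresentable_of_represents
    (N.isLevelOne_iff_isLevelOneRel.1 hN) (hNt.restrictLeaves Y)

/-- Restrictions (to subsets of size at least 3) of level-1 representable
symbolic 3-dissimilarities are level-1 representable. -/
theorem restrict_levelOneRepresentable {X M : Type}
    [Fintype X] [DecidableEq X] [Fintype M] [DecidableEq M]
    (d : SymbolicDissim3 X M) (hrep : d.LevelOneRepresentable)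
    (Y : Finset X) (hY : 3 ≤ Y.card) :
    (d.restrict Y).LevelOneRepresentable :=
  restrict_levelOneRepresentable_general d hrep Y
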